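/- Let v be a real number with 0 < |v| < 1/3 and let ζ be a real number with ζ > 9·|v|^{2/3}. Then all three roots (counted with multiplicity) of the cubic polynomial x³ + 2v·x² − ζ·x + v are real; equivalently, every complex solution a of the equation a² + 2v·a + v/a = ζ is real. -/

import Mathlib

/-!
For `v > 0` put `w = v^{1/3}`. The cubic `p(x) = x³ + 2v x² − ζ x + v` is positive at `0`, negative
at `w` (since `p(w) < w³(2w² − 7)`) and positive at `ζ + 1`, so it has two distinct real roots; the
third root is then `−2v` minus their sum, also real. For `v < 0` the substitution
`(a, v) ↦ (−a, −v)` maps roots to roots.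
-/

def dysonCubic {R : Type*} [CommRing R] (v ζ x : R) : R := x ^ 3 + 2 * v * x ^ 2 - ζ * x + v

theorem dysonCubic_neg {R : Type*} [CommRing R] (v ζ x : R) :
    dysonCubic (-v) ζ (-x) = -dysonCubic v ζ x := by
  unfold dysonCubic; ring

theorem cubic_eq_mul_of_two_roots {K : Type*} [Field K] {b c d r s : K} (hrs : r ≠ s)
    (hr : r ^ 3 + b * r ^ 2 + c * r + d = 0) (hs : s ^ 3 + b * s ^ 2 + c * s + d = 0) (a : K) :
    a ^ 3 + b * a ^ 2 + c * a + d = (a - r) * (a - s) * (a + b + r + s) := by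
  apply mul_left_cancel₀ (sub_ne_zero.2 hrs)
  linear_combination (a - s) * hr - (a - r) * hs

theorem Complex.im_eq_zero_of_cubic_of_two_real_roots {b c d r s : ℝ} (hrs : r ≠ s)
    (hr : r ^ 3 + b * r ^ 2 + c * r + d = 0) (hs : s ^ 3 + b * s ^ 2 + c * s + d = 0) {a : ℂ}
    (ha : a ^ 3 + b * a ^ 2 + c * a + d = 0) : a.im = 0 := by
  rw [cubic_eq_mul_of_two_roots (mod_cast hrs : (r : ℂ) ≠ s) (mod_cast hr) (mod_cast hs)] at ha
  rcases mul_eq_zero.1 ha with hrs | hbrs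
  · rcases mul_eq_zero.1 hrs with har | has
    · simp [sub_eq_zero.1 har]
    · simp [sub_eq_zero.1 has]
  · rw [show a = ((-(b + r + s) : ℝ) : ℂ) by push_cast; linear_combination hbrs]
    exact Complex.ofReal_im _

theorem exists_ne_zeros_of_sign_changes {f : ℝ → ℝ} (hf : Continuous f) {x₀ x₁ x₂ : ℝ}
    (h₀₁ : x₀ < x₁) (h₁₂ : x₁ < x₂) (h₀ : 0 < f x₀) (h₁ : f x₁ < 0) (h₂ : 0 < f x₂) :
    ∃ r s, r ≠ s ∧ f r = 0 ∧ f s = 0 := by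
  obtain ⟨r, hr, hfr⟩ := intermediate_value_Ioo' h₀₁.le hf.continuousOn ⟨h₁, h₀⟩
  obtain ⟨s, hs, hfs⟩ := intermediate_value_Ioo h₁₂.le hf.continuousOn ⟨h₁, h₂⟩
  exact ⟨r, s, (hr.2.trans hs.1).ne, hfr, hfs⟩

section CubeRoot

variable {w ζ : ℝ} (hw₀ : 0 < w) (hw₁ : w < 1) (hζ : 9 * w ^ 2 < ζ)
include hw₀ hw₁ hζ

theorem dysonCubic_cube_neg : dysonCubic (w ^ 3) ζ w < 0 := by
  unfold dysonCubic
  nlinarith [pow_pos hw₀ 3, mul_pos (pow_pos hw₀ 3) (sub_pos.2 hw₁)]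

theorem exists_ne_roots_dysonCubic_cube :
    ∃ r s : ℝ, r ≠ s ∧ dysonCubic (w ^ 3) ζ r = 0 ∧ dysonCubic (w ^ 3) ζ s = 0 := by
  have hζ₀ : 0 < ζ := lt_of_le_of_lt (by positivity) hζ
  refine exists_ne_zeros_of_sign_changes (x₂ := ζ + 1) (by unfold dysonCubic; fun_prop) hw₀
    (by linarith)
    (by simp [dysonCubic]; positivity) (dysonCubic_cube_neg hw₀ hw₁ hζ) ?_
  unfold dysonCubic
  nlinarith [pow_pos hw₀ 3, mul_pos hζ₀ hζ₀]

theorem im_eq_zero_of_dysonCubic_cube {a : ℂ} (ha : dysonCubic ((w ^ 3 : ℝ) : ℂ) ζ a = 0) :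
    a.im = 0 := by
  obtain ⟨r, s, hrs, hr, hs⟩ := exists_ne_roots_dysonCubic_cube hw₀ hw₁ hζ
  unfold dysonCubic at hr hs ha
  refine Complex.im_eq_zero_of_cubic_of_two_real_roots (b := 2 * w ^ 3) (c := -ζ) (d := w ^ 3)
    hrs (by linear_combination hr) (by linear_combination hs) ?_
  push_cast at ha ⊢
  linear_combination ha

end CubeRoot

/-- Theorem (Key algebraic lemma for the matrix Dyson equation): if `0 < |v| < 1/3` and
`ζ > 9 |v|^{2/3}`, then every complex root of `x³ + 2v x² − ζ x + v` is real; equivalently,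
every nonzero complex solution `a` of `a² + 2v a + v/a = ζ` is real. -/
theorem stmt19 (v ζ : ℝ) (hv0 : v ≠ 0) (hv : |v| < 1 / 3)
    (hζ : 9 * |v| ^ ((2 : ℝ) / 3) < ζ) :
    (∀ a : ℂ, a ^ 3 + 2 * (v : ℂ) * a ^ 2 - (ζ : ℂ) * a + (v : ℂ) = 0 → a.im = 0) ∧
    (∀ a : ℂ, a ≠ 0 → a ^ 2 + 2 * (v : ℂ) * a + (v : ℂ) / a = (ζ : ℂ) → a.im = 0) := by
  set w := |v| ^ ((1 : ℝ) / 3)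
  have hw₀ : 0 < w := Real.rpow_pos_of_pos (abs_pos.2 hv0) _
  have hw₃ : w ^ 3 = |v| := by
    rw [← Real.rpow_natCast, ← Real.rpow_mul (abs_nonneg v)]; norm_num
  have hw₁ : w < 1 := by
    by_contra! h; nlinarith [one_le_pow₀ (n := 3) h]
  have hζw : 9 * w ^ 2 < ζ := by
    rwa [← Real.rpow_natCast, ← Real.rpow_mul (abs_nonneg v),
      show (1 : ℝ) / 3 * (2 : ℕ) = 2 / 3 by norm_num]
  have key (a : ℂ) (ha : dysonCubic (v : ℂ) ζ a = 0) : a.im = 0 := by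
    rcases hv0.lt_or_gt with hneg | hpos
    · rw [abs_of_neg hneg] at hw₃
      have h := im_eq_zero_of_dysonCubic_cube hw₀ hw₁ hζw (a := -a)
        (by rw [hw₃, Complex.ofReal_neg, dysonCubic_neg, ha, neg_zero])
      simpa using h
    · rw [abs_of_pos hpos] at hw₃
      exact im_eq_zero_of_dysonCubic_cube hw₀ hw₁ hζw (by rwa [hw₃])
  refine ⟨key, fun a ha₀ ha => key a ?_⟩
  unfold dysonCubic
  field_simp at ha
  linear_combination ha
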